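/- Suppose $\varpi(\xi)$ is a generating function of a convolution quadrature satisfying $h^{\alpha}\varpi(e^{-h}) = 1 + O(h^p)$ as $h \to 0^+$. Define $\omega(\xi) = \varpi(\xi)\left[\gamma''_0 + \gamma''_1(1-\xi) + \cdots + \gamma''_{p-1}(1-\xi)^{p-1}\right]$, where $\gamma''_i$ are the first $p$ coefficients of the expansion $\xi^{\theta} = \sum_{i=0}^{\infty}\gamma''_i(1-\xi)^i$. Then $h^{\alpha}e^{\theta h}\omega(e^{-h}) = 1 + O(h^p)$ as $h \to 0^+$. -/

import Mathlib

open Filter Topology Asymptotics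

/-- The generalized binomial coefficient `θ choose i`. -/
noncomputable def genBinom (θ : ℝ) (i : ℕ) : ℝ :=
  (∏ j ∈ Finset.range i, (θ - j)) / (Nat.factorial i)

noncomputable def gam (θ : ℝ) (i : ℕ) : ℝ := (-1) ^ i * genBinom θ i

lemma gam_zero (θ : ℝ) : gam θ 0 = 1 := by simp [gam, genBinom]

lemma gam_succ (θ : ℝ) (i : ℕ) : ((i : ℝ) + 1) * gam θ (i + 1) = -θ * gam (θ - 1) i := by
  have hprod : ∏ j ∈ Finset.range (i + 1), (θ - (j : ℝ))
      = (∏ j ∈ Finset.range i, (θ - 1 - (j : ℝ))) * θ := by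
    rw [Finset.prod_range_succ']
    congr 1
    · exact Finset.prod_congr rfl fun j _ => by push_cast; ring
    · simp
  simp only [gam, genBinom, hprod, Nat.factorial_succ, pow_succ]
  have hi : ((i : ℝ) + 1) ≠ 0 := by positivity
  have hf : ((Nat.factorial i : ℝ)) ≠ 0 := Nat.cast_ne_zero.mpr (Nat.factorial_ne_zero i)
  field_simp
  push_cast
  ring

lemma key (p : ℕ) (θ : ℝ) : ∃ C : ℝ, 0 ≤ C ∧ ∀ x ∈ Set.Icc (0 : ℝ) (1/2),
    |(1 - x) ^ θ - ∑ i ∈ Finset.range p, gam θ i * x ^ i| ≤ C * x ^ p := by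
  induction p generalizing θ with
  | zero =>
    refine ⟨max 1 ((1/2 : ℝ) ^ θ), le_max_of_le_left one_pos.le, fun x hx => ?_⟩
    obtain ⟨hx0, hx1⟩ := hx
    have h1x : (0:ℝ) < 1 - x := by linarith
    simp only [Finset.range_zero, Finset.sum_empty, sub_zero, pow_zero, mul_one]
    rw [abs_of_nonneg (Real.rpow_nonneg h1x.le θ)]
    rcases le_or_gt 0 θ with hθ | hθ
    · exact le_max_of_le_left (Real.rpow_le_one h1x.le (by linarith) hθ)
    · refine le_max_of_le_right ?_
      exact Real.rpow_le_rpow_of_nonpos (by norm_num) (by linarith) hθ.le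
  | succ p ih =>
    obtain ⟨C, hC0, hC⟩ := ih (θ - 1)
    refine ⟨|θ| * C, by positivity, fun x hx => ?_⟩
    obtain ⟨hx0, hx1⟩ := hx
    set F : ℝ → ℝ := fun y => (1 - y) ^ θ - ∑ i ∈ Finset.range (p + 1), gam θ i * y ^ i with hF
    set F' : ℝ → ℝ := fun t =>
      -θ * ((1 - t) ^ (θ - 1) - ∑ i ∈ Finset.range p, gam (θ - 1) i * t ^ i) with hF'
    have hF0 : F 0 = 0 := by
      have hs : ∑ i ∈ Finset.range (p + 1), gam θ i * (0:ℝ) ^ i = 1 := by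
        rw [Finset.sum_range_succ']
        simp [gam_zero]
      simp [hF, Real.one_rpow, hs]
    have hderiv : ∀ t ∈ Set.Icc (0 : ℝ) x, HasDerivAt F (F' t) t := by
      intro t ⟨ht0, htx⟩
      have h1t : (0:ℝ) < 1 - t := by
        have : t ≤ 1/2 := le_trans htx hx1
        linarith
      have h1 : HasDerivAt (fun y : ℝ => (1 - y) ^ θ) (θ * (1 - t) ^ (θ - 1) * (-1)) t := by
        exact (Real.hasDerivAt_rpow_const (Or.inl h1t.ne')).comp t
          (((hasDerivAt_id t).const_sub 1))
      have h2 : HasDerivAt (fun y : ℝ => ∑ i ∈ Finset.range (p + 1), gam θ i * y ^ i)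
          (∑ i ∈ Finset.range (p + 1), gam θ i * ((i : ℝ) * t ^ (i - 1))) t :=
        HasDerivAt.fun_sum fun i _ => (hasDerivAt_pow i t).const_mul (gam θ i)
      have hsum : ∑ i ∈ Finset.range (p + 1), gam θ i * ((i : ℝ) * t ^ (i - 1))
          = -θ * ∑ i ∈ Finset.range p, gam (θ - 1) i * t ^ i := by
        rw [Finset.sum_range_succ', Finset.mul_sum]
        simp only [Nat.cast_zero, zero_mul, mul_zero, add_zero, Nat.add_sub_cancel]
        refine Finset.sum_congr rfl fun i _ => ?_
        have hg := gam_succ θ i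
        push_cast
        linear_combination t ^ i * hg
      have := h1.sub h2
      rw [hsum] at this
      convert this using 1
      · rfl
      · rfl
      · rfl
      simp [hF']
      ring
    have hbound : ∀ t ∈ Set.Ico (0 : ℝ) x, ‖F' t‖ ≤ |θ| * C * x ^ p := by
      intro t ⟨ht0, htx⟩
      have htmem : t ∈ Set.Icc (0 : ℝ) (1/2) := ⟨ht0, le_trans htx.le hx1⟩
      have h1 := hC t htmem
      have htp : t ^ p ≤ x ^ p := pow_le_pow_left₀ ht0 htx.le p
      calc ‖F' t‖ = |θ| * |(1 - t) ^ (θ - 1) - ∑ i ∈ Finset.range p, gam (θ - 1) i * t ^ i| := by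
            simp [hF', abs_mul]
        _ ≤ |θ| * (C * t ^ p) := by
            exact mul_le_mul_of_nonneg_left h1 (abs_nonneg θ)
        _ ≤ |θ| * C * x ^ p := by
            rw [mul_assoc]
            exact mul_le_mul_of_nonneg_left
              (mul_le_mul_of_nonneg_left htp hC0) (abs_nonneg θ)
    have := norm_image_sub_le_of_norm_deriv_le_segment'
      (fun t ht => (hderiv t ht).hasDerivWithinAt) hbound x (Set.right_mem_Icc.mpr hx0)
    rw [hF0, sub_zero, sub_zero] at this
    calc |F x| ≤ |θ| * C * x ^ p * x := this
      _ = |θ| * C * x ^ (p + 1) := by rw [pow_succ]; ring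

lemma real_version (θ : ℝ) (p : ℕ) :
    (fun h : ℝ => Real.exp (θ * h) *
      ∑ i ∈ Finset.range p, gam θ i * (1 - Real.exp (-h)) ^ i - 1)
      =O[𝓝[>] (0 : ℝ)] fun h : ℝ => h ^ p := by
  obtain ⟨C, hC0, hC⟩ := key p θ
  rw [isBigO_iff]
  refine ⟨Real.exp |θ| * C, ?_⟩
  have hmem : Set.Ioo (0:ℝ) (min (Real.log 2) 1) ∈ 𝓝[>] (0:ℝ) := by
    apply Ioo_mem_nhdsGT_of_mem
    constructor
    · rfl
    · exact lt_min (Real.log_pos (by norm_num)) one_pos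
  filter_upwards [hmem] with h hh
  obtain ⟨hh0, hh1⟩ := hh
  have hhl : h < Real.log 2 := lt_of_lt_of_le hh1 (min_le_left _ _)
  have hh1' : h ≤ 1 := le_of_lt (lt_of_lt_of_le hh1 (min_le_right _ _))
  set x : ℝ := 1 - Real.exp (-h) with hxdef
  have hx0 : 0 ≤ x := by
    have : Real.exp (-h) ≤ 1 := Real.exp_le_one_iff.mpr (by linarith)
    rw [hxdef]; linarith
  have hx12 : x ≤ 1/2 := by
    have : Real.exp (-Real.log 2) ≤ Real.exp (-h) := Real.exp_le_exp.mpr (by linarith)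
    rw [Real.exp_neg, Real.exp_log (by norm_num : (0:ℝ) < 2)] at this
    rw [hxdef]
    linarith
  have hxh : x ≤ h := by
    have := Real.add_one_le_exp (-h)
    rw [hxdef]; linarith
  have hrw : (1 - x) ^ θ = Real.exp (-(θ * h)) := by
    simp only [hxdef, sub_sub_cancel]
    rw [Real.rpow_def_of_pos (Real.exp_pos _), Real.log_exp]
    ring_nf
  have hkey := hC x ⟨hx0, hx12⟩
  have hfact : Real.exp (θ * h) *
      (∑ i ∈ Finset.range p, gam θ i * x ^ i) - 1
      = -(Real.exp (θ * h) * ((1 - x) ^ θ - ∑ i ∈ Finset.range p, gam θ i * x ^ i)) := by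
    rw [hrw]
    have hE : Real.exp (θ * h) * Real.exp (-(θ * h)) = 1 := by
      rw [← Real.exp_add]; simp
    linear_combination hE
  simp only [Real.norm_eq_abs]
  rw [hfact, abs_neg, abs_mul, Real.abs_exp]
  have hexp : Real.exp (θ * h) ≤ Real.exp |θ| := by
    apply Real.exp_le_exp.mpr
    calc θ * h ≤ |θ * h| := le_abs_self _
      _ = |θ| * |h| := abs_mul _ _
      _ ≤ |θ| * 1 := by
          exact mul_le_mul_of_nonneg_left (by rw [abs_of_pos hh0]; exact hh1') (abs_nonneg θ)
      _ = |θ| := mul_one _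
  have hxp : x ^ p ≤ h ^ p := pow_le_pow_left₀ hx0 hxh p
  calc Real.exp (θ * h) * |(1 - x) ^ θ - ∑ i ∈ Finset.range p, gam θ i * x ^ i|
      ≤ Real.exp |θ| * (C * x ^ p) :=
        mul_le_mul hexp hkey (abs_nonneg _) (Real.exp_pos _).le
    _ ≤ Real.exp |θ| * (C * h ^ p) := by
        apply mul_le_mul_of_nonneg_left (mul_le_mul_of_nonneg_left hxp hC0) (Real.exp_pos _).le
    _ = Real.exp |θ| * C * |h ^ p| := by
        rw [abs_of_nonneg (pow_nonneg hh0.le p)]; ring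

/-- If `h^α ϖ(e^{-h}) = 1 + O(h^p)` and
`ω(ξ) = ϖ(ξ) ∑_{i<p} γ''_i (1-ξ)^i` with `γ''_i = (-1)^i (θ choose i)`,
then `h^α e^{θh} ω(e^{-h}) = 1 + O(h^p)`. -/
theorem stmt11 (α : ℂ) (θ : ℝ) (p : ℕ) (hp : 0 < p) (ϖ : ℂ → ℂ)
    (hϖ : (fun h : ℝ => (h : ℂ) ^ α * ϖ (Real.exp (-h)) - 1)
      =O[𝓝[>] (0 : ℝ)] fun h : ℝ => h ^ p) :
    (fun h : ℝ => (h : ℂ) ^ α * Real.exp (θ * h) *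
        (ϖ (Real.exp (-h)) *
          ∑ i ∈ Finset.range p,
            (((-1 : ℝ) ^ i * genBinom θ i : ℝ) : ℂ) * ((1 : ℂ) - Real.exp (-h)) ^ i) - 1)
      =O[𝓝[>] (0 : ℝ)] fun h : ℝ => h ^ p := by
  set g : ℝ → ℝ := fun h => Real.exp (θ * h) *
      ∑ i ∈ Finset.range p, gam θ i * (1 - Real.exp (-h)) ^ i with hg
  have hgO : (fun h : ℝ => g h - 1) =O[𝓝[>] (0:ℝ)] fun h : ℝ => h ^ p := real_version θ p
  have hcast : ∀ h : ℝ, (h : ℂ) ^ α * Real.exp (θ * h) *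
        (ϖ (Real.exp (-h)) *
          ∑ i ∈ Finset.range p,
            (((-1 : ℝ) ^ i * genBinom θ i : ℝ) : ℂ) * ((1 : ℂ) - Real.exp (-h)) ^ i) - 1
      = ((g h : ℝ) : ℂ) * ((h : ℂ) ^ α * ϖ (Real.exp (-h)) - 1) + (((g h : ℝ) : ℂ) - 1) := by
    intro h
    simp only [hg, gam]
    push_cast
    ring
  have hgC : (fun h : ℝ => ((g h : ℝ) : ℂ)) =O[𝓝[>] (0:ℝ)] fun _ : ℝ => (1:ℝ) := by
    have h1 : (fun h : ℝ => ((g h : ℝ) : ℂ) - 1) =O[𝓝[>] (0:ℝ)] fun h : ℝ => h ^ p := by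
      have : (fun h : ℝ => ((g h : ℝ) : ℂ) - 1) = fun h : ℝ => ((g h - 1 : ℝ) : ℂ) := by
        funext h; push_cast; ring
      rw [this]
      exact (Complex.isBigO_ofReal_left).mpr hgO
    have h2 : (fun h : ℝ => (h:ℝ) ^ p) =O[𝓝[>] (0:ℝ)] fun _ : ℝ => (1:ℝ) := by
      rw [isBigO_iff]
      refine ⟨1, ?_⟩
      filter_upwards [Ioo_mem_nhdsGT_of_mem (Set.left_mem_Ico.mpr one_pos)] with h hh
      rw [Real.norm_eq_abs, abs_of_nonneg (pow_nonneg hh.1.le p), norm_one, one_mul]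
      exact pow_le_one₀ hh.1.le hh.2.le
    have := (h1.trans h2).add (isBigO_const_const (1:ℂ) (one_ne_zero) (𝓝[>] (0:ℝ)))
    simpa using this
  have hmul := hgC.mul hϖ
  simp only [one_mul] at hmul
  have hg1 : (fun h : ℝ => ((g h : ℝ) : ℂ) - 1) =O[𝓝[>] (0:ℝ)] fun h : ℝ => h ^ p := by
    have : (fun h : ℝ => ((g h : ℝ) : ℂ) - 1) = fun h : ℝ => ((g h - 1 : ℝ) : ℂ) := by
      funext h; push_cast; ring
    rw [this]
    exact (Complex.isBigO_ofReal_left).mpr hgO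
  have := hmul.add hg1
  refine this.congr' ?_ (by rfl)
  filter_upwards with h
  rw [hcast h]
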